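/- arXiv:1804.01269 — 2 statements merged into one kernel-verified Lean document; each statement's English description precedes it below -/
import Mathlib

section
/- For all but countably many pairs (θ₁, θ₂) ∈ (0,π) × (0,π) and every nonnegative integer k, lim_{n→∞} (1/n^{k+1}) Σ_{t=1}^n t^k sin²(θ₁ t + θ₂ t²) = 1/(2(k+1)). -/
/-!
Write `φ t = θ₁ t + θ₂ t²`. Since `sin² φ = 1/2 - cos (2φ) / 2` and
`∑_{t ≤ n} t^k ~ n^(k+1) / (k+1)`, it suffices that `∑_{t ≤ n} t^k cos (2 φ t) = o(n^(k+1))`.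
Summation by parts against the nondecreasing weight `t^k` reduces this to the unweighted Weyl sum
`∑_{t ≤ n} ω^t ζ^(t²) = o(n)`, where `ω = e^(2iθ₁)` and `ζ = e^(2iθ₂)` are not both roots of unity
unless `θ₁, θ₂ ∈ πℚ`.

If `ζ^q = 1`, the summands satisfy `u (t + q) = ω^q u t` with `ω^q ≠ 1`, so the partial sums are
bounded. Otherwise van der Corput's inequality bounds the square of the Weyl sum by `n` plus the
correlation sums `∑_t u (t + h) conj (u t)`, which are geometric with ratio `ζ^(2h) ≠ 1`. The `h`
for which `ζ^(2h)` is close to `1` are far apart, because `h ↦ ‖ζ^(2h) - 1‖` is subadditive, so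
the correlations contribute `o(n²)`.
-/

open Real Filter Finset Asymptotics ComplexConjugate Topology

theorem sum_Icc_one_eq_sum_range {M : Type*} [AddCommMonoid M] (f : ℕ → M) (n : ℕ) :
    ∑ t ∈ Icc 1 n, f t = ∑ t ∈ range n, f (t + 1) := by
  induction n with
  | zero => simp
  | succ n ih => rw [sum_Icc_succ_top (by omega), ih, sum_range_succ]

section WeightedSums

variable {E : Type*} [SeminormedAddCommGroup E]

theorem exists_norm_le_mul_add_of_isLittleO {a : ℕ → E} (ha : a =o[atTop] (fun n => (n : ℝ)))
    {ε : ℝ} (hε : 0 < ε) : ∃ C, ∀ n, ‖a n‖ ≤ ε * n + C := by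
  obtain ⟨N, hN⟩ := eventually_atTop.1 (ha.bound hε)
  refine ⟨∑ m ∈ range N, ‖a m‖, fun n => ?_⟩
  have hC : 0 ≤ ∑ m ∈ range N, ‖a m‖ := sum_nonneg fun _ _ => norm_nonneg _
  have hεn : 0 ≤ ε * n := by positivity
  rcases lt_or_ge n N with hn | hn
  · linarith [single_le_sum (fun m _ => norm_nonneg (a m)) (mem_range.2 hn)]
  · linarith [Real.norm_natCast n ▸ hN n hn]

variable [NormedSpace ℝ E]

theorem norm_sum_range_smul_le_of_monotone {f : ℕ → ℝ} (hf : Monotone f) (hf0 : 0 ≤ f 0)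
    (g : ℕ → E) {n : ℕ} {B : ℝ} (hB : ∀ m ≤ n, ‖∑ i ∈ range m, g i‖ ≤ B) :
    ‖∑ i ∈ range n, f i • g i‖ ≤ 2 * f (n - 1) * B := by
  have hfn : 0 ≤ f (n - 1) := hf0.trans (hf (Nat.zero_le _))
  have hf_succ (i : ℕ) : 0 ≤ f (i + 1) - f i := sub_nonneg.2 (hf i.le_succ)
  rw [sum_range_by_parts]
  calc _ ≤ f (n - 1) * B + ∑ i ∈ range (n - 1), (f (i + 1) - f i) * B := by
        refine (norm_sub_le _ _).trans (add_le_add ?_ ((norm_sum_le _ _).trans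
          (sum_le_sum fun i hi => ?_)))
        · rw [norm_smul_of_nonneg hfn]
          exact mul_le_mul_of_nonneg_left (hB n le_rfl) hfn
        · rw [norm_smul_of_nonneg (hf_succ i)]
          exact mul_le_mul_of_nonneg_left (hB _ (by rw [mem_range] at hi; omega)) (hf_succ i)
    _ = (2 * f (n - 1) - f 0) * B := by rw [← sum_mul, sum_range_sub]; ring
    _ ≤ 2 * f (n - 1) * B := by
        have hB0 : 0 ≤ B := (norm_nonneg _).trans (hB 0 (Nat.zero_le n))
        nlinarith

theorem isLittleO_sum_range_smul_of_monotone {w : ℕ → ℝ} (hw : Monotone w) (hw0 : 0 ≤ w 0)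
    {a : ℕ → E} (ha : (fun n => ∑ t ∈ range n, a t) =o[atTop] (fun n => (n : ℝ))) :
    (fun n => ∑ t ∈ range n, w t • a t) =o[atTop] (fun n => n * w (n - 1)) := by
  refine IsLittleO.of_bound fun c hc => ?_
  obtain ⟨C, hC⟩ := exists_norm_le_mul_add_of_isLittleO ha (by positivity : 0 < c / 4)
  filter_upwards [tendsto_natCast_atTop_atTop.eventually_ge_atTop (4 * C / c)] with n hn
  have hwn : 0 ≤ w (n - 1) := hw0.trans (hw (Nat.zero_le _))
  have hCn : 4 * C ≤ c * n := by rwa [div_le_iff₀' hc] at hn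
  have habel := norm_sum_range_smul_le_of_monotone hw hw0 a (n := n) (B := c / 4 * n + C)
    fun m hm => (hC m).trans (by gcongr)
  rw [norm_mul, Real.norm_of_nonneg hwn, Real.norm_natCast]
  nlinarith

end WeightedSums

theorem isLittleO_sum_Icc_pow_mul {a : ℕ → ℝ} (k : ℕ)
    (ha : (fun n : ℕ => ∑ t ∈ Icc 1 n, a t) =o[atTop] (fun n => (n : ℝ))) :
    (fun n : ℕ => ∑ t ∈ Icc 1 n, (t : ℝ) ^ k * a t) =o[atTop] (fun n => (n : ℝ) ^ (k + 1)) := by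
  simp only [sum_Icc_one_eq_sum_range] at ha ⊢
  have h := isLittleO_sum_range_smul_of_monotone (w := fun t : ℕ => ((t : ℝ) + 1) ^ k)
    (fun s t hst => pow_le_pow_left₀ (by positivity) (by gcongr) k) (by positivity) ha
  have hden (n : ℕ) : (n : ℝ) * (((n - 1 : ℕ) : ℝ) + 1) ^ k = n ^ (k + 1) := by
    cases n <;> simp [pow_succ, mul_comm]
  simpa [hden] using h

section PowerSums

theorem div_le_sum_Icc_pow (k n : ℕ) :
    (n : ℝ) ^ (k + 1) / (k + 1) ≤ ∑ t ∈ Icc 1 n, (t : ℝ) ^ k := by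
  have := ((pow_left_monotoneOn (M₀ := ℝ) (n := k)).mono fun x hx => hx.1).integral_le_sum
    (x₀ := 0) (a := n)
  simpa [integral_pow, sum_Icc_one_eq_sum_range] using this

theorem sum_Icc_pow_le (k n : ℕ) :
    ∑ t ∈ Icc 1 n, (t : ℝ) ^ k ≤ ((n : ℝ) + 1) ^ (k + 1) / (k + 1) := by
  have := ((pow_left_monotoneOn (M₀ := ℝ) (n := k)).mono fun x hx =>
    zero_le_one.trans hx.1).sum_le_integral (x₀ := 1) (a := n)
  rw [integral_pow, one_pow] at this
  calc _ = ∑ i ∈ range n, (1 + (i : ℝ)) ^ k := by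
        rw [sum_Icc_one_eq_sum_range]; push_cast; simp only [add_comm]
    _ ≤ _ := this
    _ ≤ _ := by rw [add_comm]; gcongr; linarith

theorem tendsto_sum_Icc_pow_div (k : ℕ) :
    Tendsto (fun n : ℕ => (∑ t ∈ Icc 1 n, (t : ℝ) ^ k) / (n : ℝ) ^ (k + 1)) atTop
      (𝓝 (1 / (k + 1))) := by
  have hupper : Tendsto (fun n : ℕ => (1 + 1 / (n : ℝ)) ^ (k + 1) / (k + 1)) atTop
      (𝓝 (1 / (k + 1))) := by
    have h := ((tendsto_const_nhds (x := (1 : ℝ))).add tendsto_one_div_atTop_nhds_zero_nat).pow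
      (k + 1) |>.div_const ((k : ℝ) + 1)
    rwa [add_zero, one_pow] at h
  refine tendsto_of_tendsto_of_tendsto_of_le_of_le' tendsto_const_nhds hupper ?_ ?_ <;>
    filter_upwards [eventually_ge_atTop 1] with n hn <;>
    have hn0 : (0 : ℝ) < n := by exact_mod_cast hn
  · rw [le_div_iff₀ (by positivity), one_div_mul_eq_div]
    exact div_le_sum_Icc_pow k n
  · rw [div_le_iff₀ (by positivity), div_mul_eq_mul_div, ← mul_pow, add_mul,
      one_div_mul_cancel hn0.ne', one_mul]
    exact sum_Icc_pow_le k n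

end PowerSums

section ExponentialSums

theorem isLittleO_natCast_of_norm_le {E : Type*} [SeminormedAddCommGroup E] {f : ℕ → E} {C : ℝ}
    (hf : ∀ n, ‖f n‖ ≤ C) : f =o[atTop] (fun n => (n : ℝ)) :=
  (IsBigO.of_bound C (.of_forall fun n => by simpa using hf n) :
      f =O[atTop] fun _ => (1 : ℝ)).trans_isLittleO
    ((isLittleO_one_left_iff ℝ).2 (by simpa using tendsto_natCast_atTop_atTop))

theorem isLittleO_sum_range_add_one {E : Type*} [SeminormedAddCommGroup E] {u : ℕ → E} {C : ℝ}
    (hu : ∀ t, ‖u t‖ ≤ C) (h : (fun n => ∑ t ∈ range n, u t) =o[atTop] (fun n => (n : ℝ))) :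
    (fun n => ∑ t ∈ range n, u (t + 1)) =o[atTop] (fun n => (n : ℝ)) := by
  have hshift (n : ℕ) : ∑ t ∈ range n, u (t + 1) = ∑ t ∈ range n, u t + (u n - u 0) := by
    rw [add_sub, ← sum_range_succ, sum_range_succ', add_sub_cancel_right]
  simp_rw [hshift]
  exact h.add (isLittleO_natCast_of_norm_le (C := C + C) fun n =>
    (norm_sub_le _ _).trans (add_le_add (hu n) (hu 0)))

theorem norm_geom_sum_le_two_div {K : Type*} [NormedField K] {z : K} (hz : ‖z‖ ≤ 1) (hz1 : z ≠ 1)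
    (n : ℕ) : ‖∑ i ∈ range n, z ^ i‖ ≤ 2 / ‖z - 1‖ := by
  rw [geom_sum_eq hz1, norm_div]
  gcongr
  calc ‖z ^ n - 1‖ ≤ ‖z ^ n‖ + ‖(1 : K)‖ := norm_sub_le _ _
    _ ≤ 1 + 1 := by rw [norm_pow, norm_one]; gcongr; exact pow_le_one₀ (norm_nonneg _) hz
    _ = 2 := one_add_one_eq_two

theorem norm_geom_sum_le_natCast {K : Type*} [NormedField K] {z : K} (hz : ‖z‖ ≤ 1) (n : ℕ) :
    ‖∑ i ∈ range n, z ^ i‖ ≤ n := by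
  calc ‖∑ i ∈ range n, z ^ i‖ ≤ ∑ _i ∈ range n, (1 : ℝ) :=
        norm_sum_le_of_le _ fun i _ => by rw [norm_pow]; exact pow_le_one₀ (norm_nonneg z) hz
    _ = n := by simp

theorem exists_norm_sum_range_le_of_add_eq_mul {K : Type*} [NormedField K] {u : ℕ → K} {q : ℕ}
    (hq : 0 < q) {z : K} (hz : ‖z‖ = 1) (hz1 : z ≠ 1) (hu : ∀ t, u (q + t) = z * u t) :
    ∃ C, ∀ n, ‖∑ t ∈ range n, u t‖ ≤ C := by
  set S : ℕ → K := fun n => ∑ t ∈ range n, u t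
  -- `c` is the fixed point of the affine recursion `S (q + n) = S q + z * S n`.
  set c := S q / (1 - z)
  have hshift (n : ℕ) : S (q + n) - c = z * (S n - c) := by
    have hrec : S (q + n) = S q + z * S n := by simp only [S, sum_range_add, hu, mul_sum]
    have : S q = (1 - z) * c := (mul_div_cancel₀ _ (sub_ne_zero.2 hz1.symm)).symm
    rw [hrec, this]
    ring
  have hbound (n : ℕ) : ‖S n - c‖ ≤ ∑ m ∈ range q, ‖S m - c‖ := by
    induction n using Nat.strong_induction_on with
    | _ n ih =>
      rcases lt_or_ge n q with hn | hn
      · exact single_le_sum (fun m _ => norm_nonneg (S m - c)) (mem_range.2 hn)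
      · obtain ⟨m, rfl⟩ := Nat.exists_eq_add_of_le hn
        rw [hshift, norm_mul, hz, one_mul]
        exact ih m (by omega)
  exact ⟨_, fun n => (norm_le_norm_sub_add (S n) c).trans (add_le_add_left (hbound n) _)⟩

theorem sum_range_sum_range_eq_sum_Ico_sum_range {M : Type*} [AddCommMonoid M]
    (f : ℕ → ℕ → M) (n : ℕ) :
    ∑ t ∈ range n, ∑ s ∈ range t, f t s = ∑ h ∈ Ico 1 n, ∑ s ∈ range (n - h), f (s + h) s := by
  rw [sum_sigma', sum_sigma']
  refine sum_nbij' (fun x => ⟨x.1 - x.2, x.2⟩) (fun x => ⟨x.2 + x.1, x.2⟩) ?_ ?_ ?_ ?_ ?_ <;>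
    simp only [mem_sigma, mem_range, mem_Ico, Sigma.forall, Sigma.mk.injEq, heq_eq_eq] <;>
    intro t s <;> try intro h
  all_goals first | lia | (congr 1; lia)

theorem sq_norm_sum_range (u : ℕ → ℂ) (n : ℕ) :
    ‖∑ t ∈ range n, u t‖ ^ 2 =
      ∑ t ∈ range n, ‖u t‖ ^ 2 + 2 * (∑ t ∈ range n, ∑ s ∈ range t, u t * conj (u s)).re := by
  induction n with
  | zero => simp
  | succ n ih =>
    rw [sum_range_succ, add_comm, Complex.sq_norm, Complex.normSq_add, ← Complex.sq_norm,
      ← Complex.sq_norm, ih, sum_range_succ, sum_range_succ (fun t => ∑ s ∈ range t, _), map_sum,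
      mul_sum, Complex.add_re]
    ring

/-- van der Corput's inequality. -/
theorem sq_norm_sum_range_le (u : ℕ → ℂ) (hu : ∀ t, ‖u t‖ ≤ 1) (n : ℕ) :
    ‖∑ t ∈ range n, u t‖ ^ 2 ≤
      n + 2 * ∑ h ∈ Ico 1 n, ‖∑ t ∈ range (n - h), u (t + h) * conj (u t)‖ := by
  rw [sq_norm_sum_range, sum_range_sum_range_eq_sum_Ico_sum_range]
  gcongr ?_ + 2 * ?_
  · simpa using sum_le_sum fun t (_ : t ∈ range n) => pow_le_one₀ (norm_nonneg _) (hu t)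
  · exact (Complex.re_le_norm _).trans (norm_sum_le _ _)

end ExponentialSums

section PowersNearOne

theorem card_le_div_add_one_of_le_sub {s : Finset ℕ} {n M : ℕ} (hM : 0 < M) (hsn : ∀ a ∈ s, a < n)
    (hs : ∀ a ∈ s, ∀ b ∈ s, a < b → M ≤ b - a) : #s ≤ n / M + 1 := by
  have hmono : StrictMonoOn (· / M) (s : Set ℕ) := fun a ha b hb hab => by
    have := Nat.div_le_div_right (c := M) (show a + M ≤ b by have := hs a ha b hb hab; omega)
    rwa [Nat.add_div_right _ hM] at this
  simpa using card_le_card_of_injOn (t := range (n / M + 1)) (· / M)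
    (fun a ha => mem_range.2 (Nat.lt_succ_of_le (Nat.div_le_div_right (hsn a ha).le))) hmono.injOn

variable {𝕜 : Type*} [NormedDivisionRing 𝕜] {z : 𝕜}

theorem norm_pow_sub_sub_one_le (hz : ‖z‖ = 1) {a b : ℕ} (hab : a ≤ b) :
    ‖z ^ (b - a) - 1‖ ≤ ‖z ^ b - 1‖ + ‖z ^ a - 1‖ := by
  calc ‖z ^ (b - a) - 1‖ = ‖z ^ b - z ^ a‖ := by
        rw [← pow_mul_pow_sub z hab, ← mul_sub_one, norm_mul, norm_pow, hz, one_pow, one_mul]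
    _ ≤ ‖z ^ b - 1‖ + ‖z ^ a - 1‖ := by
        rw [norm_sub_rev (z ^ a) 1]; exact norm_sub_le_norm_sub_add_norm_sub _ _ _

/-- Only the `h` with `z ^ h` close to `1` give large summands, and these are more than `M` apart
since `h ↦ ‖z ^ h - 1‖` is subadditive and bounded below on `[1, M]`. -/
theorem exists_sum_min_le (hz : ‖z‖ = 1) (hz' : ¬IsOfFinOrder z) {M : ℕ} (hM : 0 < M) :
    ∃ K : ℝ, ∀ n : ℕ, ∑ h ∈ Ico 1 n, min (n : ℝ) (2 / ‖z ^ h - 1‖) ≤ n ^ 2 / M + K * n := by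
  have hpos (h : ℕ) (hh : 1 ≤ h) : 0 < ‖z ^ h - 1‖ :=
    norm_pos_iff.2 (sub_ne_zero.2 fun h1 => hz' (isOfFinOrder_iff_pow_eq_one.2 ⟨h, hh, h1⟩))
  obtain ⟨h₀, hh₀, hmin⟩ := (Icc 1 M).exists_min_image (fun h => ‖z ^ h - 1‖) ⟨1, by simp; omega⟩
  set δ := ‖z ^ h₀ - 1‖ / 2 with hδ_def
  have hδ : 0 < δ := half_pos (hpos h₀ (mem_Icc.1 hh₀).1)
  refine ⟨1 + 2 / δ, fun n => ?_⟩
  set B := (Ico 1 n).filter fun h => ‖z ^ h - 1‖ < δ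
  have hB : #B ≤ n / M + 1 := by
    refine card_le_div_add_one_of_le_sub hM (fun a ha => (mem_Ico.1 (mem_filter.1 ha).1).2)
      fun a ha b hb hab => ?_
    simp only [B, mem_filter, mem_Ico] at ha hb
    by_contra! hba
    have := hmin (b - a) (mem_Icc.2 ⟨by omega, hba.le⟩)
    linarith [norm_pow_sub_sub_one_le hz hab.le, ha.2, hb.2]
  have hBsum : ∑ h ∈ B, min (n : ℝ) (2 / ‖z ^ h - 1‖) ≤ n ^ 2 / M + n :=
    calc _ ≤ #B • (n : ℝ) := sum_le_card_nsmul _ _ _ fun _ _ => min_le_left _ _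
      _ ≤ ((n / M : ℕ) + 1 : ℝ) * n := by rw [nsmul_eq_mul]; gcongr; exact_mod_cast hB
      _ ≤ (n / M + 1) * n := by gcongr; exact Nat.cast_div_le
      _ = n ^ 2 / M + n := by ring
  have hrest : ∑ h ∈ Ico 1 n with ¬‖z ^ h - 1‖ < δ, min (n : ℝ) (2 / ‖z ^ h - 1‖) ≤ 2 / δ * n :=
    calc _ ≤ #((Ico 1 n).filter fun h => ¬‖z ^ h - 1‖ < δ) • (2 / δ) :=
          sum_le_card_nsmul _ _ _ fun h hh => (min_le_right _ _).trans
            (div_le_div_of_nonneg_left zero_le_two hδ (not_lt.1 (mem_filter.1 hh).2))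
      _ ≤ 2 / δ * n := by
          rw [nsmul_eq_mul, mul_comm]
          gcongr
          exact_mod_cast (card_filter_le _ _).trans (by simp)
  rw [← sum_filter_add_sum_filter_not _ fun h => ‖z ^ h - 1‖ < δ]
  linarith

theorem isLittleO_sum_min_div_norm_pow_sub_one (hz : ‖z‖ = 1) (hz' : ¬IsOfFinOrder z) :
    (fun n : ℕ => ∑ h ∈ Ico 1 n, min (n : ℝ) (2 / ‖z ^ h - 1‖)) =o[atTop]
      (fun n => (n : ℝ) ^ 2) := by
  refine IsLittleO.of_bound fun c hc => ?_
  obtain ⟨M, hM⟩ := exists_nat_gt (2 / c)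
  have hM0 : (0 : ℝ) < M := (by positivity : (0 : ℝ) < 2 / c).trans hM
  obtain ⟨K, hK⟩ := exists_sum_min_le hz hz' (M := M) (by exact_mod_cast hM0)
  filter_upwards [tendsto_natCast_atTop_atTop.eventually_ge_atTop (2 * K / c)] with n hn
  have hsum := hK n
  rw [Real.norm_of_nonneg (sum_nonneg fun h _ => le_min n.cast_nonneg (by positivity)),
    norm_pow, Real.norm_natCast]
  have h1 : (n : ℝ) ^ 2 / M ≤ c / 2 * n ^ 2 := by
    rw [div_le_iff₀ hM0]; rw [div_lt_iff₀ hc] at hM; nlinarith [sq_nonneg (n : ℝ)]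
  have h2 : K * n ≤ c / 2 * n ^ 2 := by
    rw [div_le_iff₀ hc] at hn; nlinarith [(n.cast_nonneg : (0 : ℝ) ≤ n)]
  linarith

end PowersNearOne

section QuadraticWeylSums

variable {ω ζ : ℂ}

theorem pow_mul_pow_sq_mul_conj (hω : ‖ω‖ = 1) (hζ : ‖ζ‖ = 1) (t h : ℕ) :
    ω ^ (t + h) * ζ ^ ((t + h) ^ 2) * conj (ω ^ t * ζ ^ (t ^ 2)) =
      ω ^ h * ζ ^ (h ^ 2) * ((ζ ^ 2) ^ h) ^ t := by
  have hω' : ω * conj ω = 1 := by rw [Complex.mul_conj', hω]; simp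
  have hζ' : ζ * conj ζ = 1 := by rw [Complex.mul_conj', hζ]; simp
  calc _ = ω ^ h * ζ ^ (h ^ 2) * ((ζ ^ 2) ^ h) ^ t * (ω * conj ω) ^ t *
        (ζ * conj ζ) ^ (t ^ 2) := by simp only [map_mul, map_pow]; ring
    _ = _ := by rw [hω', hζ', one_pow, one_pow, mul_one, mul_one]

theorem isLittleO_sum_range_pow_mul_pow_sq_of_pow_eq_one (hω : ‖ω‖ = 1) {q : ℕ} (hq : 0 < q)
    (hζq : ζ ^ q = 1) (hωq : ω ^ q ≠ 1) :
    (fun n : ℕ => ∑ t ∈ range n, ω ^ t * ζ ^ (t ^ 2)) =o[atTop] (fun n => (n : ℝ)) := by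
  have hperiod (t : ℕ) : ω ^ (q + t) * ζ ^ ((q + t) ^ 2) = ω ^ q * (ω ^ t * ζ ^ (t ^ 2)) := by
    calc _ = ω ^ q * (ω ^ t * ζ ^ (t ^ 2)) * (ζ ^ q) ^ (2 * t + q) := by ring
      _ = _ := by rw [hζq, one_pow, mul_one]
  obtain ⟨C, hC⟩ := exists_norm_sum_range_le_of_add_eq_mul (u := fun t => ω ^ t * ζ ^ (t ^ 2)) hq
    (by rw [norm_pow, hω, one_pow]) hωq hperiod
  exact isLittleO_natCast_of_norm_le hC

theorem isLittleO_sum_range_pow_mul_pow_sq_of_not_isOfFinOrder (hω : ‖ω‖ = 1) (hζ : ‖ζ‖ = 1)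
    (hζ' : ¬IsOfFinOrder ζ) :
    (fun n : ℕ => ∑ t ∈ range n, ω ^ t * ζ ^ (t ^ 2)) =o[atTop] (fun n => (n : ℝ)) := by
  set u : ℕ → ℂ := fun t => ω ^ t * ζ ^ (t ^ 2)
  have hζ2 : ‖ζ ^ 2‖ = 1 := by rw [norm_pow, hζ, one_pow]
  have hζ2' : ¬IsOfFinOrder (ζ ^ 2) := fun h => hζ' (h.of_pow two_ne_zero)
  have hcorr (n h : ℕ) (hh : h ∈ Ico 1 n) :
      ‖∑ t ∈ range (n - h), u (t + h) * conj (u t)‖ ≤ min (n : ℝ) (2 / ‖(ζ ^ 2) ^ h - 1‖) := by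
    have hh := mem_Ico.1 hh
    simp only [u, pow_mul_pow_sq_mul_conj hω hζ, ← mul_sum, norm_mul, norm_pow, hω, hζ, one_pow,
      one_mul]
    refine le_min ((norm_geom_sum_le_natCast (by rw [norm_pow, hζ2, one_pow]) _).trans
      (by gcongr; omega)) (norm_geom_sum_le_two_div (by rw [norm_pow, hζ2, one_pow]) ?_ _)
    exact fun h1 => hζ2' (isOfFinOrder_iff_pow_eq_one.2 ⟨h, hh.1, h1⟩)
  have hn : (fun n : ℕ => (n : ℝ)) =o[atTop] (fun n => (n : ℝ) ^ 2) := by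
    simpa [Function.comp_def] using
      (isLittleO_pow_pow_atTop_of_lt (𝕜 := ℝ) one_lt_two).comp_tendsto tendsto_natCast_atTop_atTop
  have hsq : ((fun n => ‖∑ t ∈ range n, u t‖) ^ 2) =o[atTop] ((fun n : ℕ => (n : ℝ)) ^ 2) := by
    refine (isBigO_of_le _ fun n => ?_).trans_isLittleO
      (hn.add ((isLittleO_sum_min_div_norm_pow_sub_one hζ2 hζ2').const_mul_left 2))
    have hvdc := sq_norm_sum_range_le u (fun t => by simp [u, hω, hζ]) n
    rw [Pi.pow_apply, Real.norm_of_nonneg (sq_nonneg _), Real.norm_of_nonneg (by positivity)]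
    exact hvdc.trans (by gcongr with h hh; exact hcorr n h hh)
  exact (hsq.of_pow two_ne_zero).of_norm_left

theorem isLittleO_sum_range_pow_mul_pow_sq (hω : ‖ω‖ = 1) (hζ : ‖ζ‖ = 1)
    (h : ¬(IsOfFinOrder ω ∧ IsOfFinOrder ζ)) :
    (fun n : ℕ => ∑ t ∈ range n, ω ^ t * ζ ^ (t ^ 2)) =o[atTop] (fun n => (n : ℝ)) := by
  by_cases hζ' : IsOfFinOrder ζ
  · obtain ⟨q, hq, hζq⟩ := isOfFinOrder_iff_pow_eq_one.1 hζ'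
    exact isLittleO_sum_range_pow_mul_pow_sq_of_pow_eq_one hω hq hζq fun hωq =>
      h ⟨isOfFinOrder_iff_pow_eq_one.2 ⟨q, hq, hωq⟩, hζ'⟩
  · exact isLittleO_sum_range_pow_mul_pow_sq_of_not_isOfFinOrder hω hζ hζ'

end QuadraticWeylSums

theorem mem_range_pi_mul_rat_of_isOfFinOrder {θ : ℝ}
    (h : IsOfFinOrder (Complex.exp (↑(2 * θ) * Complex.I))) : θ ∈ Set.range fun q : ℚ => π * q := by
  obtain ⟨n, hn, hpow⟩ := isOfFinOrder_iff_pow_eq_one.1 h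
  rw [← Complex.exp_nat_mul, Complex.exp_eq_one_iff] at hpow
  obtain ⟨m, hm⟩ := hpow
  have hm' : (n : ℝ) * (2 * θ) = m * (2 * π) := by simpa using congrArg Complex.im hm
  refine ⟨m / n, ?_⟩
  push_cast
  field_simp
  linarith

theorem cos_eq_re_exp_pow_mul_exp_pow (a b : ℝ) (t : ℕ) :
    Real.cos (a * t + b * t ^ 2) =
      (Complex.exp (↑a * Complex.I) ^ t * Complex.exp (↑b * Complex.I) ^ (t ^ 2)).re := by
  rw [← Complex.exp_nat_mul, ← Complex.exp_nat_mul, ← Complex.exp_add,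
    ← Complex.exp_ofReal_mul_I_re]
  congr 2
  push_cast
  ring

theorem isLittleO_sum_Icc_cos_quadratic {θ₁ θ₂ : ℝ}
    (hθ : ¬(θ₁ ∈ Set.range (fun q : ℚ => π * q) ∧ θ₂ ∈ Set.range (fun q : ℚ => π * q))) :
    (fun n : ℕ => ∑ t ∈ Icc 1 n, Real.cos (2 * (θ₁ * t + θ₂ * (t : ℝ) ^ 2))) =o[atTop]
      (fun n => (n : ℝ)) := by
  set ω := Complex.exp (↑(2 * θ₁) * Complex.I)
  set ζ := Complex.exp (↑(2 * θ₂) * Complex.I)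
  have hω : ‖ω‖ = 1 := Complex.norm_exp_ofReal_mul_I _
  have hζ : ‖ζ‖ = 1 := Complex.norm_exp_ofReal_mul_I _
  have h := isLittleO_sum_range_pow_mul_pow_sq hω hζ fun ⟨h₁, h₂⟩ =>
    hθ ⟨mem_range_pi_mul_rat_of_isOfFinOrder h₁, mem_range_pi_mul_rat_of_isOfFinOrder h₂⟩
  refine ((Complex.reCLM.isBigO_comp _ _).trans_isLittleO
    (isLittleO_sum_range_add_one (C := 1) (fun t => by simp [hω, hζ]) h)).congr_left fun n => ?_
  simp only [sum_Icc_one_eq_sum_range, Complex.reCLM_apply, Complex.re_sum, ω, ζ,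
    ← cos_eq_re_exp_pow_mul_exp_pow, mul_add, mul_assoc]

theorem weighted_average_sin_sq :
    ∃ E : Set (ℝ × ℝ), E.Countable ∧
      ∀ θ₁ ∈ Set.Ioo (0:ℝ) π, ∀ θ₂ ∈ Set.Ioo (0:ℝ) π, (θ₁, θ₂) ∉ E →
        ∀ k : ℕ,
          Tendsto (fun n : ℕ =>
              (1 / (n:ℝ)^(k+1)) *
                ∑ t ∈ Finset.Icc 1 n, (t:ℝ)^k * (Real.sin (θ₁ * t + θ₂ * (t:ℝ)^2))^2)
            atTop (nhds (1 / (2 * ((k:ℝ) + 1)))) := by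
  refine ⟨(Set.range fun q : ℚ => π * q) ×ˢ (Set.range fun q : ℚ => π * q),
    (Set.countable_range _).prod (Set.countable_range _), fun θ₁ _ θ₂ _ hE k => ?_⟩
  have hcos := (isLittleO_sum_Icc_pow_mul k
    (isLittleO_sum_Icc_cos_quadratic hE)).tendsto_div_nhds_zero
  have hsum (n : ℕ) : 1 / (n : ℝ) ^ (k + 1) *
      ∑ t ∈ Icc 1 n, (t : ℝ) ^ k * Real.sin (θ₁ * t + θ₂ * (t : ℝ) ^ 2) ^ 2 =
      1 / 2 * ((∑ t ∈ Icc 1 n, (t : ℝ) ^ k) / n ^ (k + 1)) -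
        1 / 2 * ((∑ t ∈ Icc 1 n, (t : ℝ) ^ k * Real.cos (2 * (θ₁ * t + θ₂ * (t : ℝ) ^ 2))) /
          n ^ (k + 1)) := by
    simp only [Real.sin_sq_eq_half_sub, mul_sub, sum_sub_distrib, mul_div_assoc', ← sum_mul,
      ← sum_div]
    ring
  simp_rw [hsum]
  convert ((tendsto_sum_Icc_pow_div k).const_mul (1 / 2)).sub (hcos.const_mul (1 / 2)) using 2
  rw [mul_zero, sub_zero, one_div_mul_one_div]
end

section
/- The 4×4 symmetric matrix M(A,B) = [[1, 0, B/2, B/3], [0, 1, −A/2, −A/3], [B/2, −A/2, (A²+B²)/3, (A²+B²)/4], [B/3, −A/3, (A²+B²)/4, (A²+B²)/5]] is positive definite whenever A² + B² > 0. -/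
/-!
`M(A, B)` is the Gram matrix, in `L²([0, 1]; ℝ²)`, of `e₁, e₂, t v, t² v` with `v = (B, -A)`.
Gram–Schmidt writes it as `Lᴴ D L` with `L` unit upper triangular and
`D = diag(1, 1, ‖v‖² / 12, ‖v‖² / 180)`, where `1 / 12` and `1 / 180` are the squared distances
of `t` from the constants and of `t²` from the linear polynomials. Since `‖v‖² = A² + B² > 0`,
`D` is positive definite and `L` is invertible.
-/

open Matrix

noncomputable def ldlFactor (A B : ℝ) : Matrix (Fin 4) (Fin 4) ℝ :=
  !![1, 0, B / 2, B / 3;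
     0, 1, -A / 2, -A / 3;
     0, 0, 1, 1;
     0, 0, 0, 1]

noncomputable def ldlDiag (A B : ℝ) : Fin 4 → ℝ :=
  ![1, 1, (A ^ 2 + B ^ 2) / 12, (A ^ 2 + B ^ 2) / 180]

theorem ldlFactor_isUpperTriangular (A B : ℝ) : (ldlFactor A B).IsUpperTriangular := by
  intro i j hji
  fin_cases i <;> fin_cases j <;> simp_all [ldlFactor]

theorem det_ldlFactor (A B : ℝ) : (ldlFactor A B).det = 1 := by
  rw [det_of_isUpperTriangular (ldlFactor_isUpperTriangular A B)]
  simp [ldlFactor, Fin.prod_univ_four]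

theorem ldlDiag_pos {A B : ℝ} (h : 0 < A ^ 2 + B ^ 2) (i : Fin 4) : 0 < ldlDiag A B i := by
  fin_cases i <;> simp [ldlDiag, h]

theorem conjTranspose_ldlFactor_mul_diagonal_mul (A B : ℝ) :
    (ldlFactor A B)ᴴ * diagonal (ldlDiag A B) * ldlFactor A B =
      !![1, 0, B / 2, B / 3;
         0, 1, -A / 2, -A / 3;
         B / 2, -A / 2, (A^2 + B^2) / 3, (A^2 + B^2) / 4;
         B / 3, -A / 3, (A^2 + B^2) / 4, (A^2 + B^2) / 5] := by
  ext i j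
  rw [mul_apply]
  simp only [mul_diagonal, conjTranspose_apply, star_trivial, Fin.sum_univ_four]
  fin_cases i <;> fin_cases j <;>
    simp only [ldlFactor, ldlDiag, of_apply, Fin.zero_eta, Fin.mk_one, Fin.reduceFinMk, cons_val,
      cons_val_zero, cons_val_one] <;> ring

theorem M_matrix_posDef (A B : ℝ) (h : 0 < A^2 + B^2) :
    (Matrix.of
      !![1, 0, B / 2, B / 3;
         0, 1, -A / 2, -A / 3;
         B / 2, -A / 2, (A^2 + B^2) / 3, (A^2 + B^2) / 4;
         B / 3, -A / 3, (A^2 + B^2) / 4, (A^2 + B^2) / 5] : Matrix (Fin 4) (Fin 4) ℝ).PosDef := by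
  have hD : (diagonal (ldlDiag A B)).PosDef := posDef_diagonal_iff.2 (ldlDiag_pos h)
  have hL : Function.Injective (ldlFactor A B).mulVec :=
    mulVec_injective_of_det_ne_zero (by simp [det_ldlFactor])
  have hM := hD.conjTranspose_mul_mul_same hL
  rwa [conjTranspose_ldlFactor_mul_diagonal_mul] at hM
end
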